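/- arXiv:1907.03550 — 3 statements merged into one kernel-verified Lean document; each statement's English description precedes it below -/
import Mathlib

section
/- Assume W² = EG − F² is nowhere zero. Then for every s ∈ ℝ, Q(Ē, F̄, Ḡ)(s) = λ⁴·[ Q(E, F, G)(s) + W²·( ε²₁₁·u'³ + (2ε²₁₂ − ε¹₁₁)·u'²v' + (ε²₂₂ − 2ε¹₁₂)·u'v'² − ε¹₂₂·v'³ ) ], where all surface quantities are evaluated at (u(s), v(s)). (For rectifying curves this says that the normal components satisfy ᾱ·N̄ = λ⁴[α·N + (μ/κ)·h] with h the ε-expression above times W².) -/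
set_option maxHeartbeats 1000000


open Matrix

noncomputable section

/-- Euclidean 3-space. -/
abbrev E3 : Type := EuclideanSpace ℝ (Fin 3)

/-- The cross product on Euclidean 3-space. -/
def cross3 (a b : E3) : E3 :=
  (WithLp.equiv 2 (Fin 3 → ℝ)).symm
    ((WithLp.equiv 2 (Fin 3 → ℝ) a) ⨯₃ (WithLp.equiv 2 (Fin 3 → ℝ) b))

/-- The Euclidean dot product on 3-space. -/
def dot3 (a b : E3) : ℝ := inner ℝ a b

/-- Partial derivative in the first (`u`) direction. -/
def Du {F : Type} [NormedAddCommGroup F] [NormedSpace ℝ F] (f : ℝ × ℝ → F) (p : ℝ × ℝ) : F :=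
  fderiv ℝ f p (1, 0)

/-- Partial derivative in the second (`v`) direction. -/
def Dv {F : Type} [NormedAddCommGroup F] [NormedSpace ℝ F] (f : ℝ × ℝ → F) (p : ℝ × ℝ) : F :=
  fderiv ℝ f p (0, 1)

/-- First fundamental form coefficient `E = φ_u ⬝ φ_u`. -/
def Efun (φ : ℝ × ℝ → E3) (p : ℝ × ℝ) : ℝ := dot3 (Du φ p) (Du φ p)

/-- First fundamental form coefficient `F = φ_u ⬝ φ_v`. -/
def Ffun (φ : ℝ × ℝ → E3) (p : ℝ × ℝ) : ℝ := dot3 (Du φ p) (Dv φ p)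

/-- First fundamental form coefficient `G = φ_v ⬝ φ_v`. -/
def Gfun (φ : ℝ × ℝ → E3) (p : ℝ × ℝ) : ℝ := dot3 (Dv φ p) (Dv φ p)

/-- Christoffel symbol `Γ¹₁₁` computed from first-fundamental-form data `(E, F, G)`. -/
def Γ111 (E F G : ℝ × ℝ → ℝ) (p : ℝ × ℝ) : ℝ :=
  (G p * Du E p - 2 * F p * Du F p + F p * Dv E p) / (2 * (E p * G p - F p ^ 2))

/-- Christoffel symbol `Γ²₁₁`. -/
def Γ211 (E F G : ℝ × ℝ → ℝ) (p : ℝ × ℝ) : ℝ :=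
  (2 * E p * Du F p - E p * Dv E p - F p * Du E p) / (2 * (E p * G p - F p ^ 2))

/-- Christoffel symbol `Γ¹₁₂`. -/
def Γ112 (E F G : ℝ × ℝ → ℝ) (p : ℝ × ℝ) : ℝ :=
  (G p * Dv E p - F p * Du G p) / (2 * (E p * G p - F p ^ 2))

/-- Christoffel symbol `Γ²₁₂`. -/
def Γ212 (E F G : ℝ × ℝ → ℝ) (p : ℝ × ℝ) : ℝ :=
  (E p * Du G p - F p * Dv E p) / (2 * (E p * G p - F p ^ 2))

/-- Christoffel symbol `Γ¹₂₂`. -/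
def Γ122 (E F G : ℝ × ℝ → ℝ) (p : ℝ × ℝ) : ℝ :=
  (2 * G p * Dv F p - G p * Du G p - F p * Dv G p) / (2 * (E p * G p - F p ^ 2))

/-- Christoffel symbol `Γ²₂₂`. -/
def Γ222 (E F G : ℝ × ℝ → ℝ) (p : ℝ × ℝ) : ℝ :=
  (E p * Dv G p - 2 * F p * Dv F p + F p * Du G p) / (2 * (E p * G p - F p ^ 2))

/-- Conformal deviation `ε¹₁₁`. -/
def eps111 (E F G lam : ℝ × ℝ → ℝ) (p : ℝ × ℝ) : ℝ :=
  (E p * G p * Du lam p - 2 * F p ^ 2 * Du lam p + E p * F p * Dv lam p) /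
    (lam p * (E p * G p - F p ^ 2))

/-- Conformal deviation `ε²₁₁`. -/
def eps211 (E F G lam : ℝ × ℝ → ℝ) (p : ℝ × ℝ) : ℝ :=
  (E p * F p * Du lam p - E p ^ 2 * Dv lam p) / (lam p * (E p * G p - F p ^ 2))

/-- Conformal deviation `ε¹₁₂`. -/
def eps112 (E F G lam : ℝ × ℝ → ℝ) (p : ℝ × ℝ) : ℝ :=
  (E p * G p * Dv lam p - F p * G p * Du lam p) / (lam p * (E p * G p - F p ^ 2))

/-- Conformal deviation `ε²₁₂`. -/
def eps212 (E F G lam : ℝ × ℝ → ℝ) (p : ℝ × ℝ) : ℝ :=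
  (E p * G p * Du lam p - E p * F p * Dv lam p) / (lam p * (E p * G p - F p ^ 2))

/-- Conformal deviation `ε¹₂₂`. -/
def eps122 (E F G lam : ℝ × ℝ → ℝ) (p : ℝ × ℝ) : ℝ :=
  (F p * G p * Dv lam p - G p ^ 2 * Du lam p) / (lam p * (E p * G p - F p ^ 2))

/-- Conformal deviation `ε²₂₂`. -/
def eps222 (E F G lam : ℝ × ℝ → ℝ) (p : ℝ × ℝ) : ℝ :=
  (E p * G p * Dv lam p - 2 * F p ^ 2 * Dv lam p + F p * G p * Du lam p) /
    (lam p * (E p * G p - F p ^ 2))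

/-- The normal-component expression `Q(E,F,G)(s)` of a rectifying curve with parameters
`u, v`, computed from first-fundamental-form data `(E, F, G)`. -/
def Qexpr (u v : ℝ → ℝ) (E F G : ℝ × ℝ → ℝ) (s : ℝ) : ℝ :=
  (E (u s, v s) * G (u s, v s) - F (u s, v s) ^ 2) *
    ((deriv u s * deriv (deriv v) s - deriv (deriv u) s * deriv v s)
      + Γ211 E F G (u s, v s) * (deriv u s) ^ 3
      + (2 * Γ212 E F G (u s, v s) - Γ111 E F G (u s, v s)) * ((deriv u s) ^ 2 * deriv v s)
      + (Γ222 E F G (u s, v s) - 2 * Γ112 E F G (u s, v s)) * (deriv u s * (deriv v s) ^ 2)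
      - Γ122 E F G (u s, v s) * (deriv v s) ^ 3)

lemma Du_mul' (f g : ℝ × ℝ → ℝ) (p : ℝ × ℝ) (hf : DifferentiableAt ℝ f p)
    (hg : DifferentiableAt ℝ g p) :
    Du (fun q => f q * g q) p = f p * Du g p + g p * Du f p := by
  unfold Du
  rw [fderiv_fun_mul hf hg]
  simp

lemma Dv_mul' (f g : ℝ × ℝ → ℝ) (p : ℝ × ℝ) (hf : DifferentiableAt ℝ f p)
    (hg : DifferentiableAt ℝ g p) :
    Dv (fun q => f q * g q) p = f p * Dv g p + g p * Dv f p := by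
  unfold Dv
  rw [fderiv_fun_mul hf hg]
  simp

lemma Du_lamsq_mul (lam f : ℝ × ℝ → ℝ) (p : ℝ × ℝ) (hlam : DifferentiableAt ℝ lam p)
    (hf : DifferentiableAt ℝ f p) :
    Du (fun q => lam q ^ 2 * f q) p
      = 2 * lam p * Du lam p * f p + lam p ^ 2 * Du f p := by
  have h : (fun q => lam q ^ 2 * f q) = fun q => lam q * (lam q * f q) := by
    ext q; ring
  rw [h, Du_mul' lam (fun q => lam q * f q) p hlam (hlam.mul hf), Du_mul' lam f p hlam hf]
  ring

lemma Dv_lamsq_mul (lam f : ℝ × ℝ → ℝ) (p : ℝ × ℝ) (hlam : DifferentiableAt ℝ lam p)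
    (hf : DifferentiableAt ℝ f p) :
    Dv (fun q => lam q ^ 2 * f q) p
      = 2 * lam p * Dv lam p * f p + lam p ^ 2 * Dv f p := by
  have h : (fun q => lam q ^ 2 * f q) = fun q => lam q * (lam q * f q) := by
    ext q; ring
  rw [h, Dv_mul' lam (fun q => lam q * f q) p hlam (hlam.mul hf), Dv_mul' lam f p hlam hf]
  ring

lemma contDiff_Du {φ : ℝ × ℝ → E3} (hφ : ContDiff ℝ (⊤ : ℕ∞) φ) : ContDiff ℝ (⊤ : ℕ∞) (Du φ) := by
  have h : ContDiff ℝ (⊤ : ℕ∞) (fderiv ℝ φ) := hφ.fderiv_right (by simp)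
  exact h.clm_apply contDiff_const

lemma contDiff_Dv {φ : ℝ × ℝ → E3} (hφ : ContDiff ℝ (⊤ : ℕ∞) φ) : ContDiff ℝ (⊤ : ℕ∞) (Dv φ) := by
  have h : ContDiff ℝ (⊤ : ℕ∞) (fderiv ℝ φ) := hφ.fderiv_right (by simp)
  exact h.clm_apply contDiff_const

lemma contDiff_Efun {φ : ℝ × ℝ → E3} (hφ : ContDiff ℝ (⊤ : ℕ∞) φ) : ContDiff ℝ (⊤ : ℕ∞) (Efun φ) :=
  (contDiff_Du hφ).inner ℝ (contDiff_Du hφ)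

lemma contDiff_Ffun {φ : ℝ × ℝ → E3} (hφ : ContDiff ℝ (⊤ : ℕ∞) φ) : ContDiff ℝ (⊤ : ℕ∞) (Ffun φ) :=
  (contDiff_Du hφ).inner ℝ (contDiff_Dv hφ)

lemma contDiff_Gfun {φ : ℝ × ℝ → E3} (hφ : ContDiff ℝ (⊤ : ℕ∞) φ) : ContDiff ℝ (⊤ : ℕ∞) (Gfun φ) :=
  (contDiff_Dv hφ).inner ℝ (contDiff_Dv hφ)

/-- under a conformal change `Ē = λ²E, F̄ = λ²F, Ḡ = λ²G` with `λ` smooth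
and nowhere vanishing and `W² = EG − F²` nowhere zero, for every `s`,
`Q(Ē,F̄,Ḡ)(s) = λ⁴·[Q(E,F,G)(s) + W²·(ε²₁₁u'³ + (2ε²₁₂ − ε¹₁₁)u'²v'
  + (ε²₂₂ − 2ε¹₁₂)u'v'² − ε¹₂₂v'³)]`. -/
theorem stmt5 (φ : ℝ × ℝ → E3) (lam : ℝ × ℝ → ℝ) (u v : ℝ → ℝ)
    (hφ : ContDiff ℝ (⊤ : ℕ∞) φ) (hlam : ContDiff ℝ (⊤ : ℕ∞) lam) (hlam0 : ∀ p, lam p ≠ 0)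
    (hu : ContDiff ℝ (⊤ : ℕ∞) u) (hv : ContDiff ℝ (⊤ : ℕ∞) v)
    (hW : ∀ p, Efun φ p * Gfun φ p - Ffun φ p ^ 2 ≠ 0)
    (s : ℝ) :
    Qexpr u v (fun p => lam p ^ 2 * Efun φ p) (fun p => lam p ^ 2 * Ffun φ p)
        (fun p => lam p ^ 2 * Gfun φ p) s =
      lam (u s, v s) ^ 4 *
        (Qexpr u v (Efun φ) (Ffun φ) (Gfun φ) s
          + (Efun φ (u s, v s) * Gfun φ (u s, v s) - Ffun φ (u s, v s) ^ 2) *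
            (eps211 (Efun φ) (Ffun φ) (Gfun φ) lam (u s, v s) * (deriv u s) ^ 3
              + (2 * eps212 (Efun φ) (Ffun φ) (Gfun φ) lam (u s, v s)
                  - eps111 (Efun φ) (Ffun φ) (Gfun φ) lam (u s, v s)) *
                  ((deriv u s) ^ 2 * deriv v s)
              + (eps222 (Efun φ) (Ffun φ) (Gfun φ) lam (u s, v s)
                  - 2 * eps112 (Efun φ) (Ffun φ) (Gfun φ) lam (u s, v s)) *
                  (deriv u s * (deriv v s) ^ 2)
              - eps122 (Efun φ) (Ffun φ) (Gfun φ) lam (u s, v s) * (deriv v s) ^ 3)) := by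

  have p : ℝ × ℝ := (u s, v s)
  have hla : DifferentiableAt ℝ lam (u s, v s) := (hlam.differentiable (by simp)) _
  have hle : DifferentiableAt ℝ (Efun φ) (u s, v s) :=
    ((contDiff_Efun hφ).differentiable (by simp)) _
  have hlf : DifferentiableAt ℝ (Ffun φ) (u s, v s) :=
    ((contDiff_Ffun hφ).differentiable (by simp)) _
  have hlg : DifferentiableAt ℝ (Gfun φ) (u s, v s) :=
    ((contDiff_Gfun hφ).differentiable (by simp)) _
  have hl : lam (u s, v s) ≠ 0 := hlam0 _
  have hw : Efun φ (u s, v s) * Gfun φ (u s, v s) - Ffun φ (u s, v s) ^ 2 ≠ 0 := hW _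
  simp only [Qexpr, Γ111, Γ211, Γ112, Γ212, Γ122, Γ222, eps111, eps211, eps112, eps212,
    eps122, eps222,
    Du_lamsq_mul lam (Efun φ) (u s, v s) hla hle,
    Dv_lamsq_mul lam (Efun φ) (u s, v s) hla hle,
    Du_lamsq_mul lam (Ffun φ) (u s, v s) hla hlf,
    Dv_lamsq_mul lam (Ffun φ) (u s, v s) hla hlf,
    Du_lamsq_mul lam (Gfun φ) (u s, v s) hla hlg,
    Dv_lamsq_mul lam (Gfun φ) (u s, v s) hla hlg]
  set A := Efun φ (u s, v s) with hA
  set B := Ffun φ (u s, v s) with hB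
  set C := Gfun φ (u s, v s) with hC
  set L := lam (u s, v s) with hL
  set Au := Du (Efun φ) (u s, v s) with hAu
  set Av := Dv (Efun φ) (u s, v s) with hAv
  set Bu := Du (Ffun φ) (u s, v s) with hBu
  set Bv := Dv (Ffun φ) (u s, v s) with hBv
  set Cu := Du (Gfun φ) (u s, v s) with hCu
  set Cv := Dv (Gfun φ) (u s, v s) with hCv
  set Lu := Du lam (u s, v s) with hLu
  set Lv := Dv lam (u s, v s) with hLv
  set x := deriv u s with hx
  set y := deriv v s with hy
  set x2 := deriv (deriv u) s with hx2
  set y2 := deriv (deriv v) s with hy2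
  have hw2 : L ^ 2 * A * (L ^ 2 * C) - (L ^ 2 * B) ^ 2 ≠ 0 := by
    have : L ^ 2 * A * (L ^ 2 * C) - (L ^ 2 * B) ^ 2 = L ^ 4 * (A * C - B ^ 2) := by ring
    rw [this]
    exact mul_ne_zero (pow_ne_zero _ hl) hw
  field_simp
  ring
end
end

section
/- For every s ∈ ℝ the tangential components of the position vector of the rectifying curve α satisfy α(s)·φ_u = ξ(s)·(E·u' + F·v') + (μ(s)/κ(s))·v'·(α''(s)·(φ_u × φ_v)) and α(s)·φ_v = ξ(s)·(F·u' + G·v') − (μ(s)/κ(s))·u'·(α''(s)·(φ_u × φ_v)), all surface quantities being evaluated at (u(s), v(s)). -/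
open Matrix

noncomputable section

private lemma key1 (r t : ℝ) (x y A : E3) :
    dot3 (cross3 (r • x + t • y) A) x = t * dot3 A (cross3 x y) := by
  simp [dot3, cross3, crossProduct, PiLp.inner_apply, Fin.sum_univ_three, RCLike.inner_apply]
  ring

private lemma key2 (r t : ℝ) (x y A : E3) :
    dot3 (cross3 (r • x + t • y) A) y = -(r * dot3 A (cross3 x y)) := by
  simp [dot3, cross3, crossProduct, PiLp.inner_apply, Fin.sum_univ_three, RCLike.inner_apply]
  ring

private lemma tangent (φ : ℝ × ℝ → E3) (u v : ℝ → ℝ) (α : ℝ → E3)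
    (hφ : ContDiff ℝ (⊤ : ℕ∞) φ) (hu : ContDiff ℝ (⊤ : ℕ∞) u) (hv : ContDiff ℝ (⊤ : ℕ∞) v)
    (hα : ∀ s, α s = φ (u s, v s)) (s : ℝ) :
    deriv α s = deriv u s • Du φ (u s, v s) + deriv v s • Dv φ (u s, v s) := by
  have hg : HasDerivAt (fun s => (u s, v s)) (deriv u s, deriv v s) s :=
    ((hu.differentiable (by simp) s).hasDerivAt).prodMk ((hv.differentiable (by simp) s).hasDerivAt)
  have hφd : HasFDerivAt φ (fderiv ℝ φ (u s, v s)) (u s, v s) :=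
    (hφ.differentiable (by simp) (u s, v s)).hasFDerivAt
  have h := hφd.comp_hasDerivAt s hg
  have h2 : deriv α s = fderiv ℝ φ (u s, v s) (deriv u s, deriv v s) := by
    rw [show α = fun s => φ (u s, v s) from funext hα]
    exact h.deriv
  rw [h2, show ((deriv u s, deriv v s) : ℝ × ℝ)
      = deriv u s • ((1 : ℝ), (0 : ℝ)) + deriv v s • ((0 : ℝ), (1 : ℝ)) by
    simp [Prod.ext_iff], map_add,
    ContinuousLinearMap.map_smul, ContinuousLinearMap.map_smul]
  rfl

/-- for a unit-speed rectifying curve `α(s) = φ(u(s), v(s))` with curvature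
`κ > 0`, the tangential components of the position vector satisfy
`α·φ_u = ξ·(Eu' + Fv') + (μ/κ)·v'·(α''·(φ_u × φ_v))` and
`α·φ_v = ξ·(Fu' + Gv') − (μ/κ)·u'·(α''·(φ_u × φ_v))` for every `s`. -/
theorem stmt7 (φ : ℝ × ℝ → E3) (u v : ℝ → ℝ) (α : ℝ → E3) (ξ μ κ : ℝ → ℝ)
    (hφ : ContDiff ℝ (⊤ : ℕ∞) φ) (hu : ContDiff ℝ (⊤ : ℕ∞) u) (hv : ContDiff ℝ (⊤ : ℕ∞) v)
    (hξ : ContDiff ℝ (⊤ : ℕ∞) ξ) (hμ : ContDiff ℝ (⊤ : ℕ∞) μ)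
    (hα : ∀ s, α s = φ (u s, v s))
    (hunit : ∀ s, ‖deriv α s‖ = 1)
    (hκ : ∀ s, κ s = ‖deriv (deriv α) s‖)
    (hκpos : ∀ s, 0 < κ s)
    (hrect : ∀ s, α s = ξ s • deriv α s
      + μ s • ((κ s)⁻¹ • cross3 (deriv α s) (deriv (deriv α) s))) :
    ∀ s : ℝ,
      dot3 (α s) (Du φ (u s, v s)) =
        ξ s * (Efun φ (u s, v s) * deriv u s + Ffun φ (u s, v s) * deriv v s)
          + μ s / κ s * deriv v s *
            dot3 (deriv (deriv α) s) (cross3 (Du φ (u s, v s)) (Dv φ (u s, v s))) ∧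
      dot3 (α s) (Dv φ (u s, v s)) =
        ξ s * (Ffun φ (u s, v s) * deriv u s + Gfun φ (u s, v s) * deriv v s)
          - μ s / κ s * deriv u s *
            dot3 (deriv (deriv α) s) (cross3 (Du φ (u s, v s)) (Dv φ (u s, v s))) := by
  intro s
  have hT := tangent φ u v α hφ hu hv hα s
  set φu := Du φ (u s, v s) with hφu
  set φv := Dv φ (u s, v s) with hφv
  set A := deriv (deriv α) s with hA
  set u' := deriv u s
  set v' := deriv v s
  have e0 : ∀ w : E3, dot3 (α s) w
      = ξ s * dot3 (deriv α s) w + μ s * ((κ s)⁻¹ * dot3 (cross3 (deriv α s) A) w) := by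
    intro w
    rw [hrect s]
    simp only [dot3, inner_add_left, real_inner_smul_left, ← hA]
  have eTu : dot3 (deriv α s) φu = Efun φ (u s, v s) * u' + Ffun φ (u s, v s) * v' := by
    rw [hT]
    simp only [dot3, inner_add_left, real_inner_smul_left]
    rw [Efun, Ffun, dot3, dot3, real_inner_comm φv φu]
    ring
  have eTv : dot3 (deriv α s) φv = Ffun φ (u s, v s) * u' + Gfun φ (u s, v s) * v' := by
    rw [hT]
    simp only [dot3, inner_add_left, real_inner_smul_left]
    rw [Ffun, Gfun, dot3, dot3]
    ring
  have eCu : dot3 (cross3 (deriv α s) A) φu = v' * dot3 A (cross3 φu φv) := by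
    rw [hT]; exact key1 u' v' φu φv A
  have eCv : dot3 (cross3 (deriv α s) A) φv = -(u' * dot3 A (cross3 φu φv)) := by
    rw [hT]; exact key2 u' v' φu φv A
  constructor
  · rw [e0 φu, eTu, eCu, div_eq_mul_inv]; ring
  · rw [e0 φv, eTv, eCv, div_eq_mul_inv]; ring
end
end

section
/- For every s ∈ ℝ the geodesic curvature of the unit-speed curve α satisfies κ_g(s) = √(EG − F²)·[ Γ²₁₁·u'³ + (2Γ²₁₂ − Γ¹₁₁)·u'²v' + (Γ²₂₂ − 2Γ¹₁₂)·u'v'² − Γ¹₂₂·v'³ + u'v'' − u''v' ], all surface quantities being evaluated at (u(s), v(s)). -/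
open Matrix

noncomputable section

/-- The geodesic-curvature expression `K(E,F,G)(s)` of a curve with parameters `u, v`,
computed from first-fundamental-form data `(E, F, G)`. -/
def Kexpr (u v : ℝ → ℝ) (E F G : ℝ × ℝ → ℝ) (s : ℝ) : ℝ :=
  Real.sqrt (E (u s, v s) * G (u s, v s) - F (u s, v s) ^ 2) *
    (Γ211 E F G (u s, v s) * (deriv u s) ^ 3
      + (2 * Γ212 E F G (u s, v s) - Γ111 E F G (u s, v s)) * ((deriv u s) ^ 2 * deriv v s)
      + (Γ222 E F G (u s, v s) - 2 * Γ112 E F G (u s, v s)) * (deriv u s * (deriv v s) ^ 2)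
      - Γ122 E F G (u s, v s) * (deriv v s) ^ 3
      + (deriv u s * deriv (deriv v) s - deriv (deriv u) s * deriv v s))


open Matrix in
lemma dot3_eq (a b : E3) : dot3 a b =
    (WithLp.equiv 2 (Fin 3 → ℝ) a) ⬝ᵥ (WithLp.equiv 2 (Fin 3 → ℝ) b) := by
  simp [dot3, PiLp.inner_apply, RCLike.inner_apply, dotProduct, WithLp.equiv,
    Equiv.refl_apply, mul_comm]

open Matrix in
lemma dvec_cross_cross (x a b y : Fin 3 → ℝ) :
    x ⬝ᵥ ((a ⨯₃ b) ⨯₃ y) = (a ⬝ᵥ y)*(b ⬝ᵥ x) - (a ⬝ᵥ x)*(b ⬝ᵥ y) := by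
  simp [crossProduct, dotProduct, Fin.sum_univ_three]
  ring

lemma dot3_cross3 (x a b y : E3) (c : ℝ) :
    dot3 x (cross3 (c • cross3 a b) y) =
      c * ((dot3 a y)*(dot3 b x) - (dot3 a x)*(dot3 b y)) := by
  simp only [dot3_eq, cross3, Equiv.apply_symm_apply, WithLp.equiv_apply, WithLp.equiv_symm_apply, WithLp.ofLp_toLp, WithLp.ofLp_smul,
    LinearMap.map_smul, LinearMap.smul_apply, smul_dotProduct, dotProduct_smul,
    smul_eq_mul]
  rw [dvec_cross_cross]

lemma dot3_cross_self (a b : E3) :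
    dot3 (cross3 a b) (cross3 a b) = dot3 a a * dot3 b b - dot3 a b ^ 2 := by
  simp only [dot3_eq, cross3, Equiv.apply_symm_apply, cross_dot_cross]
  rw [dotProduct_comm ((WithLp.equiv 2 (Fin 3 → ℝ)) b) ((WithLp.equiv 2 (Fin 3 → ℝ)) a), sq]

lemma norm_cross3 (a b : E3) : ‖cross3 a b‖ = Real.sqrt (dot3 a a * dot3 b b - dot3 a b ^ 2) := by
  rw [← dot3_cross_self]
  rw [show dot3 (cross3 a b) (cross3 a b) = ‖cross3 a b‖^2 from real_inner_self_eq_norm_sq _]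
  exact (Real.sqrt_sq (norm_nonneg _)).symm

lemma dot3_comm (a b : E3) : dot3 a b = dot3 b a := real_inner_comm b a

lemma dot3_add_right (a b c : E3) : dot3 a (b + c) = dot3 a b + dot3 a c := inner_add_right a b c

lemma dot3_smul_right (a b : E3) (c : ℝ) : dot3 a (c • b) = c * dot3 a b :=
  real_inner_smul_right a b c

lemma clm_dir {F : Type} [NormedAddCommGroup F] [NormedSpace ℝ F] (L : (ℝ × ℝ) →L[ℝ] F)
    (a b : ℝ) : L (a, b) = a • L (1, 0) + b • L (0, 1) := by
  have h : ((a, b) : ℝ × ℝ) = a • ((1:ℝ), (0:ℝ)) + b • ((0:ℝ), (1:ℝ)) := by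
    simp [Prod.ext_iff]
  rw [h, map_add, L.map_smul, L.map_smul]

lemma hasFDerivAt_fderiv_apply {φ : ℝ × ℝ → E3} {q : ℝ × ℝ}
    (h : DifferentiableAt ℝ (fderiv ℝ φ) q) (w : ℝ × ℝ) :
    HasFDerivAt (fun r => fderiv ℝ φ r w) ((fderiv ℝ (fderiv ℝ φ) q).flip w) q := by
  have h2 := h.hasFDerivAt.clm_apply (hasFDerivAt_const w q)
  simpa using h2

lemma fderiv_dot_partials {φ : ℝ × ℝ → E3} {q : ℝ × ℝ}
    (h : DifferentiableAt ℝ (fderiv ℝ φ) q) (w₁ w₂ w : ℝ × ℝ) :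
    fderiv ℝ (fun r => dot3 (fderiv ℝ φ r w₁) (fderiv ℝ φ r w₂)) q w
      = dot3 (fderiv ℝ φ q w₁) (fderiv ℝ (fderiv ℝ φ) q w w₂)
        + dot3 (fderiv ℝ (fderiv ℝ φ) q w w₁) (fderiv ℝ φ q w₂) := by
  have h1 := hasFDerivAt_fderiv_apply h w₁
  have h2 := hasFDerivAt_fderiv_apply h w₂
  have h3 := h1.inner ℝ h2
  rw [show (fun r => dot3 (fderiv ℝ φ r w₁) (fderiv ℝ φ r w₂))
        = fun r => (inner ℝ (fderiv ℝ φ r w₁) (fderiv ℝ φ r w₂) : ℝ) from rfl,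
      h3.fderiv]
  simp [fderivInnerCLM_apply, dot3]

/-- for a unit-speed curve `α(s) = φ(u(s), v(s))` on a surface with
`EG − F² > 0` everywhere and unit normal `N̂ = (φ_u × φ_v)/‖φ_u × φ_v‖`, the geodesic
curvature `κ_g = α''·(N̂ × α')` satisfies
`κ_g = √(EG − F²)·[Γ²₁₁u'³ + (2Γ²₁₂ − Γ¹₁₁)u'²v' + (Γ²₂₂ − 2Γ¹₁₂)u'v'² − Γ¹₂₂v'³
  + u'v'' − u''v']`. -/
theorem stmt9 (φ : ℝ × ℝ → E3) (u v : ℝ → ℝ) (α : ℝ → E3)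
    (hφ : ContDiff ℝ (⊤ : ℕ∞) φ) (hu : ContDiff ℝ (⊤ : ℕ∞) u) (hv : ContDiff ℝ (⊤ : ℕ∞) v)
    (hα : ∀ s, α s = φ (u s, v s))
    (hunit : ∀ s, ‖deriv α s‖ = 1)
    (hW : ∀ p, 0 < Efun φ p * Gfun φ p - Ffun φ p ^ 2)
    (s : ℝ) :
    dot3 (deriv (deriv α) s)
        (cross3
          (‖cross3 (Du φ (u s, v s)) (Dv φ (u s, v s))‖⁻¹ •
            cross3 (Du φ (u s, v s)) (Dv φ (u s, v s)))
          (deriv α s)) =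
      Kexpr u v (Efun φ) (Ffun φ) (Gfun φ) s := by
  clear hunit
  have hφ2 : ContDiff ℝ 2 φ := hφ.of_le (WithTop.coe_le_coe.mpr le_top)
  have hu2 : ContDiff ℝ 2 u := hu.of_le (WithTop.coe_le_coe.mpr le_top)
  have hv2 : ContDiff ℝ 2 v := hv.of_le (WithTop.coe_le_coe.mpr le_top)
  have hφd : Differentiable ℝ φ := hφ2.differentiable (by norm_num)
  have hφf : ∀ q, HasFDerivAt φ (fderiv ℝ φ q) q := fun q => (hφd q).hasFDerivAt
  have hD1 : ContDiff ℝ 1 (fderiv ℝ φ) := hφ2.fderiv_right (by norm_num)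
  have hD1d : Differentiable ℝ (fderiv ℝ φ) := hD1.differentiable (by norm_num)
  have hud : ∀ t, HasDerivAt u (deriv u t) t :=
    fun t => ((hu2.differentiable (by norm_num)) t).hasDerivAt
  have hvd : ∀ t, HasDerivAt v (deriv v t) t :=
    fun t => ((hv2.differentiable (by norm_num)) t).hasDerivAt
  have hu2' : ContDiff ℝ ((1:ℕ) + 1) u := by norm_num; exact hu2
  have hv2' : ContDiff ℝ ((1:ℕ) + 1) v := by norm_num; exact hv2
  have hu1d : ∀ t, HasDerivAt (deriv u) (deriv (deriv u) t) t := by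
    intro t
    exact (((contDiff_succ_iff_deriv.mp hu2').2.2.differentiable (by norm_num)) t).hasDerivAt
  have hv1d : ∀ t, HasDerivAt (deriv v) (deriv (deriv v) t) t := by
    intro t
    exact (((contDiff_succ_iff_deriv.mp hv2').2.2.differentiable (by norm_num)) t).hasDerivAt
  have hα1 : ∀ t, HasDerivAt α (deriv u t • Du φ (u t, v t) + deriv v t • Dv φ (u t, v t)) t := by
    intro t
    have hγ : HasDerivAt (fun r => (u r, v r)) (deriv u t, deriv v t) t := (hud t).prodMk (hvd t)
    have h := (hφf (u t, v t)).comp_hasDerivAt t hγ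
    have he : fderiv ℝ φ (u t, v t) (deriv u t, deriv v t)
        = deriv u t • Du φ (u t, v t) + deriv v t • Dv φ (u t, v t) := clm_dir _ _ _
    have hαe : α = φ ∘ (fun r => (u r, v r)) := funext fun t => hα t
    rw [hαe, ← he]
    exact h
  have hderivα : deriv α = fun t => deriv u t • Du φ (u t, v t) + deriv v t • Dv φ (u t, v t) :=
    funext fun t => (hα1 t).deriv
  have hΦ2f : HasFDerivAt (fderiv ℝ φ) (fderiv ℝ (fderiv ℝ φ) (u s, v s)) (u s, v s) := (hD1d (u s, v s)).hasFDerivAt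
  have hsym : ∀ a b : ℝ × ℝ, fderiv ℝ (fderiv ℝ φ) (u s, v s) a b = fderiv ℝ (fderiv ℝ φ) (u s, v s) b a :=
    second_derivative_symmetric hφf hΦ2f
  have hDuγ : HasDerivAt (fun t => Du φ (u t, v t))
      (deriv u s • (fderiv ℝ (fderiv ℝ φ) (u s, v s) ((1:ℝ), (0:ℝ)) ((1:ℝ), (0:ℝ))) + deriv v s • (fderiv ℝ (fderiv ℝ φ) (u s, v s) ((1:ℝ), (0:ℝ)) ((0:ℝ), (1:ℝ)))) s := by
    have hγ : HasDerivAt (fun r => (u r, v r)) (deriv u s, deriv v s) s := (hud s).prodMk (hvd s)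
    have h := (hasFDerivAt_fderiv_apply (hD1d (u s, v s)) ((1:ℝ), (0:ℝ))).comp_hasDerivAt s hγ
    have he : ((fderiv ℝ (fderiv ℝ φ) (u s, v s)).flip ((1:ℝ), (0:ℝ))) (deriv u s, deriv v s)
        = deriv u s • (fderiv ℝ (fderiv ℝ φ) (u s, v s) ((1:ℝ), (0:ℝ)) ((1:ℝ), (0:ℝ))) + deriv v s • (fderiv ℝ (fderiv ℝ φ) (u s, v s) ((1:ℝ), (0:ℝ)) ((0:ℝ), (1:ℝ))) := by
      rw [clm_dir]
      simp only [ContinuousLinearMap.flip_apply]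
      rw [hsym ((0:ℝ), (1:ℝ)) ((1:ℝ), (0:ℝ))]
    rw [← he]
    exact h
  have hDvγ : HasDerivAt (fun t => Dv φ (u t, v t))
      (deriv u s • (fderiv ℝ (fderiv ℝ φ) (u s, v s) ((1:ℝ), (0:ℝ)) ((0:ℝ), (1:ℝ))) + deriv v s • (fderiv ℝ (fderiv ℝ φ) (u s, v s) ((0:ℝ), (1:ℝ)) ((0:ℝ), (1:ℝ)))) s := by
    have hγ : HasDerivAt (fun r => (u r, v r)) (deriv u s, deriv v s) s := (hud s).prodMk (hvd s)
    have h := (hasFDerivAt_fderiv_apply (hD1d (u s, v s)) ((0:ℝ), (1:ℝ))).comp_hasDerivAt s hγ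
    have he : ((fderiv ℝ (fderiv ℝ φ) (u s, v s)).flip ((0:ℝ), (1:ℝ))) (deriv u s, deriv v s)
        = deriv u s • (fderiv ℝ (fderiv ℝ φ) (u s, v s) ((1:ℝ), (0:ℝ)) ((0:ℝ), (1:ℝ))) + deriv v s • (fderiv ℝ (fderiv ℝ φ) (u s, v s) ((0:ℝ), (1:ℝ)) ((0:ℝ), (1:ℝ))) := by
      rw [clm_dir]
      simp only [ContinuousLinearMap.flip_apply]
    rw [← he]
    exact h
  have hα2 : HasDerivAt (deriv α)
      ((deriv u s • (deriv u s • (fderiv ℝ (fderiv ℝ φ) (u s, v s) ((1:ℝ), (0:ℝ)) ((1:ℝ), (0:ℝ))) + deriv v s • (fderiv ℝ (fderiv ℝ φ) (u s, v s) ((1:ℝ), (0:ℝ)) ((0:ℝ), (1:ℝ)))) + deriv (deriv u) s • Du φ (u s, v s))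
        + (deriv v s • (deriv u s • (fderiv ℝ (fderiv ℝ φ) (u s, v s) ((1:ℝ), (0:ℝ)) ((0:ℝ), (1:ℝ))) + deriv v s • (fderiv ℝ (fderiv ℝ φ) (u s, v s) ((0:ℝ), (1:ℝ)) ((0:ℝ), (1:ℝ)))) + deriv (deriv v) s • Dv φ (u s, v s))) s := by
    rw [hderivα]
    exact ((hu1d s).smul hDuγ).add ((hv1d s).smul hDvγ)
  have hEu : Du (Efun φ) (u s, v s) = 2 * dot3 (Du φ (u s, v s)) (fderiv ℝ (fderiv ℝ φ) (u s, v s) ((1:ℝ), (0:ℝ)) ((1:ℝ), (0:ℝ))) := by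
    have h := fderiv_dot_partials (φ := φ) (hD1d (u s, v s)) ((1:ℝ), (0:ℝ)) ((1:ℝ), (0:ℝ)) ((1:ℝ), (0:ℝ))
    rw [show Du (Efun φ) (u s, v s)
        = fderiv ℝ (fun r => dot3 (fderiv ℝ φ r ((1:ℝ), (0:ℝ))) (fderiv ℝ φ r ((1:ℝ), (0:ℝ)))) (u s, v s) ((1:ℝ), (0:ℝ)) from rfl,
      h]
    rw [show fderiv ℝ φ (u s, v s) ((1:ℝ), (0:ℝ)) = Du φ (u s, v s) from rfl]
    rw [dot3_comm (fderiv ℝ (fderiv ℝ φ) (u s, v s) ((1:ℝ), (0:ℝ)) ((1:ℝ), (0:ℝ))) (Du φ (u s, v s))]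
    ring
  have hEv : Dv (Efun φ) (u s, v s) = 2 * dot3 (Du φ (u s, v s)) (fderiv ℝ (fderiv ℝ φ) (u s, v s) ((1:ℝ), (0:ℝ)) ((0:ℝ), (1:ℝ))) := by
    have h := fderiv_dot_partials (φ := φ) (hD1d (u s, v s)) ((1:ℝ), (0:ℝ)) ((1:ℝ), (0:ℝ)) ((0:ℝ), (1:ℝ))
    rw [hsym ((0:ℝ), (1:ℝ)) ((1:ℝ), (0:ℝ))] at h
    rw [show Dv (Efun φ) (u s, v s)
        = fderiv ℝ (fun r => dot3 (fderiv ℝ φ r ((1:ℝ), (0:ℝ))) (fderiv ℝ φ r ((1:ℝ), (0:ℝ)))) (u s, v s) ((0:ℝ), (1:ℝ)) from rfl,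
      h]
    rw [show fderiv ℝ φ (u s, v s) ((1:ℝ), (0:ℝ)) = Du φ (u s, v s) from rfl]
    rw [dot3_comm (fderiv ℝ (fderiv ℝ φ) (u s, v s) ((1:ℝ), (0:ℝ)) ((0:ℝ), (1:ℝ))) (Du φ (u s, v s))]
    ring
  have hFu : Du (Ffun φ) (u s, v s) = dot3 (Du φ (u s, v s)) (fderiv ℝ (fderiv ℝ φ) (u s, v s) ((1:ℝ), (0:ℝ)) ((0:ℝ), (1:ℝ))) + dot3 (Dv φ (u s, v s)) (fderiv ℝ (fderiv ℝ φ) (u s, v s) ((1:ℝ), (0:ℝ)) ((1:ℝ), (0:ℝ))) := by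
    have h := fderiv_dot_partials (φ := φ) (hD1d (u s, v s)) ((1:ℝ), (0:ℝ)) ((0:ℝ), (1:ℝ)) ((1:ℝ), (0:ℝ))
    rw [show Du (Ffun φ) (u s, v s)
        = fderiv ℝ (fun r => dot3 (fderiv ℝ φ r ((1:ℝ), (0:ℝ))) (fderiv ℝ φ r ((0:ℝ), (1:ℝ)))) (u s, v s) ((1:ℝ), (0:ℝ)) from rfl,
      h]
    rw [show fderiv ℝ φ (u s, v s) ((1:ℝ), (0:ℝ)) = Du φ (u s, v s) from rfl]
    rw [show fderiv ℝ φ (u s, v s) ((0:ℝ), (1:ℝ)) = Dv φ (u s, v s) from rfl]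
    rw [dot3_comm (fderiv ℝ (fderiv ℝ φ) (u s, v s) ((1:ℝ), (0:ℝ)) ((1:ℝ), (0:ℝ))) (Dv φ (u s, v s))]
  have hFv : Dv (Ffun φ) (u s, v s) = dot3 (Du φ (u s, v s)) (fderiv ℝ (fderiv ℝ φ) (u s, v s) ((0:ℝ), (1:ℝ)) ((0:ℝ), (1:ℝ))) + dot3 (Dv φ (u s, v s)) (fderiv ℝ (fderiv ℝ φ) (u s, v s) ((1:ℝ), (0:ℝ)) ((0:ℝ), (1:ℝ))) := by
    have h := fderiv_dot_partials (φ := φ) (hD1d (u s, v s)) ((1:ℝ), (0:ℝ)) ((0:ℝ), (1:ℝ)) ((0:ℝ), (1:ℝ))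
    rw [hsym ((0:ℝ), (1:ℝ)) ((1:ℝ), (0:ℝ))] at h
    rw [show Dv (Ffun φ) (u s, v s)
        = fderiv ℝ (fun r => dot3 (fderiv ℝ φ r ((1:ℝ), (0:ℝ))) (fderiv ℝ φ r ((0:ℝ), (1:ℝ)))) (u s, v s) ((0:ℝ), (1:ℝ)) from rfl,
      h]
    rw [show fderiv ℝ φ (u s, v s) ((1:ℝ), (0:ℝ)) = Du φ (u s, v s) from rfl]
    rw [show fderiv ℝ φ (u s, v s) ((0:ℝ), (1:ℝ)) = Dv φ (u s, v s) from rfl]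
    rw [dot3_comm (fderiv ℝ (fderiv ℝ φ) (u s, v s) ((1:ℝ), (0:ℝ)) ((0:ℝ), (1:ℝ))) (Dv φ (u s, v s))]
  have hGu : Du (Gfun φ) (u s, v s) = 2 * dot3 (Dv φ (u s, v s)) (fderiv ℝ (fderiv ℝ φ) (u s, v s) ((1:ℝ), (0:ℝ)) ((0:ℝ), (1:ℝ))) := by
    have h := fderiv_dot_partials (φ := φ) (hD1d (u s, v s)) ((0:ℝ), (1:ℝ)) ((0:ℝ), (1:ℝ)) ((1:ℝ), (0:ℝ))
    rw [show Du (Gfun φ) (u s, v s)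
        = fderiv ℝ (fun r => dot3 (fderiv ℝ φ r ((0:ℝ), (1:ℝ))) (fderiv ℝ φ r ((0:ℝ), (1:ℝ)))) (u s, v s) ((1:ℝ), (0:ℝ)) from rfl,
      h]
    rw [show fderiv ℝ φ (u s, v s) ((0:ℝ), (1:ℝ)) = Dv φ (u s, v s) from rfl]
    rw [dot3_comm (fderiv ℝ (fderiv ℝ φ) (u s, v s) ((1:ℝ), (0:ℝ)) ((0:ℝ), (1:ℝ))) (Dv φ (u s, v s))]
    ring
  have hGv : Dv (Gfun φ) (u s, v s) = 2 * dot3 (Dv φ (u s, v s)) (fderiv ℝ (fderiv ℝ φ) (u s, v s) ((0:ℝ), (1:ℝ)) ((0:ℝ), (1:ℝ))) := by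
    have h := fderiv_dot_partials (φ := φ) (hD1d (u s, v s)) ((0:ℝ), (1:ℝ)) ((0:ℝ), (1:ℝ)) ((0:ℝ), (1:ℝ))
    rw [show Dv (Gfun φ) (u s, v s)
        = fderiv ℝ (fun r => dot3 (fderiv ℝ φ r ((0:ℝ), (1:ℝ))) (fderiv ℝ φ r ((0:ℝ), (1:ℝ)))) (u s, v s) ((0:ℝ), (1:ℝ)) from rfl,
      h]
    rw [show fderiv ℝ φ (u s, v s) ((0:ℝ), (1:ℝ)) = Dv φ (u s, v s) from rfl]
    rw [dot3_comm (fderiv ℝ (fderiv ℝ φ) (u s, v s) ((0:ℝ), (1:ℝ)) ((0:ℝ), (1:ℝ))) (Dv φ (u s, v s))]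
    ring
  have hX : (0:ℝ) < dot3 (Du φ (u s, v s)) (Du φ (u s, v s)) * dot3 (Dv φ (u s, v s)) (Dv φ (u s, v s)) - dot3 (Du φ (u s, v s)) (Dv φ (u s, v s)) ^ 2 := hW (u s, v s)
  have hXne : dot3 (Du φ (u s, v s)) (Du φ (u s, v s)) * dot3 (Dv φ (u s, v s)) (Dv φ (u s, v s)) - dot3 (Du φ (u s, v s)) (Dv φ (u s, v s)) ^ 2 ≠ 0 := ne_of_gt hX
  have hwne : Real.sqrt (dot3 (Du φ (u s, v s)) (Du φ (u s, v s)) * dot3 (Dv φ (u s, v s)) (Dv φ (u s, v s)) - dot3 (Du φ (u s, v s)) (Dv φ (u s, v s)) ^ 2) ≠ 0 :=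
    ne_of_gt (Real.sqrt_pos.mpr hX)
  rw [hα2.deriv, (hα1 s).deriv, dot3_cross3, norm_cross3]
  simp only [Kexpr, Γ211, Γ111, Γ212, Γ112, Γ122, Γ222, Efun, Ffun, Gfun]
  rw [hEu, hEv, hFu, hFv, hGu, hGv]
  simp only [dot3_add_right, dot3_smul_right]
  rw [dot3_comm (Dv φ (u s, v s)) (Du φ (u s, v s))]
  apply mul_left_cancel₀ hwne
  rw [← mul_assoc, mul_inv_cancel₀ hwne, one_mul, ← mul_assoc,
    Real.mul_self_sqrt hX.le]
  field_simp
  ring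
end
end
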